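/- arXiv:1306.6050 — 2 statements merged into one kernel-verified Lean document; each statement's English description precedes it below -/
import Mathlib

section
/- Let p be an odd prime, q = p^n, and let m divide q − 1. Regard V = 𝔽_q as an n-dimensional vector space over 𝔽_p. Suppose there exist 𝔽_p-subspaces V₁, …, V_s of V with s ≥ 2, each Vᵢ ≠ 0, such that V = V₁ ⊕ ⋯ ⊕ V_s and for every α ∈ S_{q,m} and every i ∈ {1, …, s} there is j ∈ {1, …, s} with Vᵢ·α = Vⱼ (i.e., the multiplication maps by elements of S_{q,m} permute the subspaces V₁, …, V_s). Then G_{q,m} is non-synchronizing. -/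
/-- A section of a partition: a set containing exactly one element of each part. -/
def IsSection {Ω : Type*} (P : Set (Set Ω)) (S : Set Ω) : Prop :=
  ∀ B ∈ P, ∃! x, x ∈ S ∧ x ∈ B

/-- A partition is `G`-regular if it admits a section `S` such that `Sg` is a
section for every `g ∈ G`. -/
def IsGRegular {Ω : Type*} (G : Subgroup (Equiv.Perm Ω)) (P : Set (Set Ω)) : Prop :=
  ∃ S : Set Ω, IsSection P S ∧ ∀ g ∈ G, IsSection P ((⇑g) '' S)

/-- The trivial partitions: the one-block partition and the partition into singletons. -/
def IsTrivialPartition {Ω : Type*} (P : Set (Set Ω)) : Prop :=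
  P = {Set.univ} ∨ P = Set.range (fun x : Ω => ({x} : Set Ω))

/-- A permutation group is transitive if any point can be mapped to any other. -/
def IsTransitivePermGroup {Ω : Type*} (G : Subgroup (Equiv.Perm Ω)) : Prop :=
  ∀ a b : Ω, ∃ g ∈ G, g a = b

/-- A partition is `G`-invariant if `G` permutes its parts. -/
def IsInvariantPartition {Ω : Type*} (G : Subgroup (Equiv.Perm Ω)) (P : Set (Set Ω)) : Prop :=
  ∀ g ∈ G, ∀ B ∈ P, (⇑g) '' B ∈ P

/-- A permutation group is primitive if it is transitive and preserves no
non-trivial partition. -/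
def IsPrimitivePermGroup {Ω : Type*} (G : Subgroup (Equiv.Perm Ω)) : Prop :=
  IsTransitivePermGroup G ∧
    ∀ P : Set (Set Ω), Setoid.IsPartition P → IsInvariantPartition G P → IsTrivialPartition P

/-- A permutation group is synchronizing if it is non-trivial and its only
`G`-regular partitions are the trivial ones. -/
def IsSynchronizing {Ω : Type*} (G : Subgroup (Equiv.Perm Ω)) : Prop :=
  G ≠ ⊥ ∧ ∀ P : Set (Set Ω), Setoid.IsPartition P → IsGRegular G P → IsTrivialPartition P

/-- The set `S_{q,m}` of `m`-th powers of nonzero elements of a field. -/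
def mthPowers (F : Type*) [Field F] (m : ℕ) : Set F :=
  {x : F | ∃ a : F, a ≠ 0 ∧ a ^ m = x}

/-- The group `G_{q,m} ≤ Sym(F)`, generated by all translations `x ↦ x + α` and the
multiplications `x ↦ x * α` for `α ∈ S_{q,m}`. -/
def Gqm (F : Type*) [Field F] (m : ℕ) : Subgroup (Equiv.Perm F) :=
  Subgroup.closure
    ((Set.range fun a : F => Equiv.addRight a) ∪
      {e : Equiv.Perm F | ∃ (a : F) (ha : a ≠ 0), a ∈ mthPowers F m ∧ e = Equiv.mulRight₀ a ha})

/-!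
The cosets of `A = V₀` form a `G_{q,m}`-regular partition. Since `S_{q,m}` permutes the
summands, every `A * α` (`α ∈ S_{q,m}`) is one of them, say `Vⱼ`, and a single additive
subgroup `K` is a complement to all these `Vⱼ`: take `K = ker φ`, where `φ : F →+ F` is
`x ↦ x * β⁻¹` on each summand of the form `Vⱼ = A * β` and zero on the others, so that `φ`
maps each such `Vⱼ` bijectively onto `A ⊇ range φ`. Then for `g : x ↦ x * α + c` in
`G_{q,m}` the image `K * α + c` is a translate of a complement of `A`, i.e. a section of the
coset partition. This partition is non-trivial as `0 ≠ V₀ ≠ F`.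
-/

open AddMonoidHom

section Cosets

variable {G : Type*} [AddCommGroup G]

def cosetPartition (H : AddSubgroup G) : Set (Set G) :=
  (QuotientAddGroup.leftRel H).classes

theorem isPartition_cosetPartition (H : AddSubgroup G) : Setoid.IsPartition (cosetPartition H) :=
  Setoid.isPartition_classes _

theorem not_isTrivialPartition_cosetPartition {H : AddSubgroup G} (hbot : H ≠ ⊥)
    (htop : H ≠ ⊤) : ¬ IsTrivialPartition (cosetPartition H) := by
  have hH : (H : Set G) ∈ cosetPartition H :=
    ⟨0, by ext x; simp [QuotientAddGroup.leftRel_apply]⟩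
  rintro (h | h) <;> rw [h] at hH
  · exact htop (AddSubgroup.coe_eq_univ.mp hH)
  · obtain ⟨x, hx⟩ := hH
    exact hbot (AddSubgroup.coe_eq_singleton.mp ⟨x, hx.symm⟩)

theorem isSection_cosetPartition_image_add_right {H K : AddSubgroup G} (hKH : IsCompl K H)
    (c : G) : IsSection (cosetPartition H) ((· + c) '' K) := by
  rintro _ ⟨y, rfl⟩
  obtain ⟨k, hk, h, hh, hkh⟩ := AddSubgroup.mem_sup.mp (hKH.codisjoint.eq_top ▸
    AddSubgroup.mem_top (y - c) : y - c ∈ K ⊔ H)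
  have hky : -(k + c) + y ∈ H := by
    convert hh using 1
    rw [show y = k + h + c by rw [hkh]; abel]
    abel
  refine ⟨k + c, ⟨⟨k, hk, rfl⟩, QuotientAddGroup.leftRel_apply.mpr hky⟩, ?_⟩
  rintro _ ⟨⟨k', hk', rfl⟩, hk'y⟩
  have hk'y : -(k' + c) + y ∈ H := QuotientAddGroup.leftRel_apply.mp hk'y
  have hkk' : k' - k ∈ H := by
    convert H.sub_mem hky hk'y using 1
    abel
  rw [sub_eq_zero.mp (AddSubgroup.disjoint_def.mp hKH.disjoint (K.sub_mem hk' hk) hkk')]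

theorem AddMonoidHom.isCompl_ker {G' : Type*} [AddCommGroup G'] (φ : G →+ G')
    {H : AddSubgroup G} (hinj : Function.Injective (φ.comp H.subtype))
    (hrange : φ.range ≤ (φ.comp H.subtype).range) : IsCompl φ.ker H := by
  constructor
  · rw [AddSubgroup.disjoint_def]
    intro x hxK hxH
    have : φ.comp H.subtype ⟨x, hxH⟩ = φ.comp H.subtype 0 := by simpa using hxK
    exact congrArg Subtype.val (hinj this)
  · rw [codisjoint_iff, eq_top_iff]
    rintro x -
    obtain ⟨v, hv⟩ := hrange (mem_range.mpr ⟨x, rfl⟩)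
    exact AddSubgroup.mem_sup.mpr ⟨x - v, by simpa [sub_eq_zero] using hv.symm, v, v.2, by abel⟩

theorem DirectSum.IsInternal.exists_addMonoidHom_comp_subtype {ι : Type*} [DecidableEq ι]
    {G' : Type*} [AddCommGroup G'] {V : ι → AddSubgroup G} (hV : DirectSum.IsInternal V)
    (f : ∀ i, V i →+ G') :
    ∃ φ : G →+ G', (∀ i, φ.comp (V i).subtype = f i) ∧ φ.range ≤ ⨆ i, (f i).range := by
  let e := AddEquiv.ofBijective _ hV
  refine ⟨(DirectSum.toAddMonoid f).comp e.symm.toAddMonoidHom, fun i => ?_, ?_⟩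
  · ext v
    have : e.symm v = DirectSum.of (fun i => V i) i v := by
      rw [AddEquiv.symm_apply_eq]; exact (DirectSum.coeAddMonoidHom_of _ _ _).symm
    simp [this]
  · rintro _ ⟨x, rfl⟩
    change DirectSum.toAddMonoid f (e.symm x) ∈ _
    generalize e.symm x = y
    induction y using DirectSum.induction_on with
    | zero => simp
    | of i v => simpa using AddSubgroup.mem_iSup_of_mem i (mem_range.mpr ⟨v, rfl⟩)
    | add x y hx hy => simpa using AddSubgroup.add_mem _ hx hy

end Cosets

section FieldMultiples

variable {F : Type*} [Field F]

theorem AddSubgroup.map_mulRight_map_mulRight (A : AddSubgroup F) {β γ : F} (h : β * γ = 1) :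
    (A.map (mulRight β)).map (mulRight γ) = A := by
  rw [AddSubgroup.map_map]
  convert A.map_id
  ext x
  simp [mul_assoc, h]

theorem IsCompl.map_mulRight {K H : AddSubgroup F} (hKH : IsCompl K H) {α : F} (hα : α ≠ 0) :
    IsCompl (K.map (mulRight α)) (H.map (mulRight α)) :=
  (AddEquiv.mapAddSubgroup (AddAut.mulRight (Units.mk0 α hα))).isCompl_iff.mp hKH

theorem DirectSum.IsInternal.exists_isCompl_of_map_mulRight_eq {ι : Type*} [DecidableEq ι]
    {V : ι → AddSubgroup F} (hV : DirectSum.IsInternal V) (A : AddSubgroup F) :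
    ∃ K : AddSubgroup F, ∀ i β, β ≠ 0 → A.map (mulRight β) = V i → IsCompl K (V i) := by
  have hc : ∀ i, ∃ c : F, (V i).map (mulRight c) ≤ A ∧
      ∀ β, β ≠ 0 → A.map (mulRight β) = V i → c ≠ 0 ∧ (V i).map (mulRight c) = A := by
    intro i
    by_cases h : ∃ β, β ≠ 0 ∧ A.map (mulRight β) = V i
    · obtain ⟨β, hβ, hAβ⟩ := h
      have hVA : (V i).map (mulRight β⁻¹) = A :=
        hAβ ▸ A.map_mulRight_map_mulRight (mul_inv_cancel₀ hβ)
      exact ⟨β⁻¹, hVA.le, fun _ _ _ => ⟨inv_ne_zero hβ, hVA⟩⟩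
    · refine ⟨0, ?_, fun β hβ hAβ => (h ⟨β, hβ, hAβ⟩).elim⟩
      rintro _ ⟨x, -, rfl⟩
      simp
  choose c hcA hc using hc
  obtain ⟨φ, hφV, hφrange⟩ :=
    hV.exists_addMonoidHom_comp_subtype fun i => (mulRight (c i)).comp (V i).subtype
  have hrange_eq : ∀ i,
      ((mulRight (c i)).comp (V i).subtype).range = (V i).map (mulRight (c i)) := fun i => by
    rw [range_comp, AddSubgroup.range_subtype]
  refine ⟨φ.ker, fun i β hβ hAβ => φ.isCompl_ker ?_ ?_⟩
  · rw [hφV]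
    exact (mul_left_injective₀ (hc i β hβ hAβ).1).comp Subtype.val_injective
  · rw [hφV, hrange_eq, (hc i β hβ hAβ).2]
    exact hφrange.trans (iSup_le fun j => (hrange_eq j).le.trans (hcA j))

end FieldMultiples

section Gqm

variable {F : Type*} [Field F] {m : ℕ}

theorem ne_zero_of_mem_mthPowers {α : F} (h : α ∈ mthPowers F m) : α ≠ 0 := by
  obtain ⟨a, ha, rfl⟩ := h
  exact pow_ne_zero m ha

theorem inv_mem_mthPowers {α : F} (hα : α ∈ mthPowers F m) : α⁻¹ ∈ mthPowers F m := by
  obtain ⟨a, ha, rfl⟩ := hα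
  exact ⟨a⁻¹, inv_ne_zero ha, inv_pow a m⟩

theorem one_mem_mthPowers : (1 : F) ∈ mthPowers F m :=
  ⟨1, one_ne_zero, one_pow m⟩

theorem exists_eq_mul_add_of_mem_Gqm {g : Equiv.Perm F} (hg : g ∈ Gqm F m) :
    ∃ α ∈ mthPowers F m, ∃ c : F, ∀ x, g x = x * α + c := by
  induction hg using Subgroup.closure_induction with
  | mem g hg =>
    rcases hg with ⟨c, rfl⟩ | ⟨α, -, hα, rfl⟩
    · exact ⟨1, one_mem_mthPowers, c, fun x => by simp⟩
    · exact ⟨α, hα, 0, fun x => by simp⟩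
  | one => exact ⟨1, one_mem_mthPowers, 0, fun x => by simp⟩
  | mul g h _ _ hg hh =>
    obtain ⟨α, ⟨a, ha, rfl⟩, c, hg⟩ := hg
    obtain ⟨β, ⟨b, hb, rfl⟩, d, hh⟩ := hh
    exact ⟨b ^ m * a ^ m, ⟨b * a, mul_ne_zero hb ha, mul_pow b a m⟩, d * a ^ m + c,
      fun x => by simp only [Equiv.Perm.mul_apply, hg, hh]; ring⟩
  | inv g _ hg =>
    obtain ⟨α, hα, c, hg⟩ := hg
    refine ⟨α⁻¹, inv_mem_mthPowers hα, -c * α⁻¹, fun x => ?_⟩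
    rw [Equiv.Perm.inv_eq_iff_eq, hg]
    field_simp [ne_zero_of_mem_mthPowers hα]
    ring

theorem isGRegular_Gqm_cosetPartition {A K : AddSubgroup F}
    (hK : ∀ α ∈ mthPowers F m, IsCompl K (A.map (mulRight α))) :
    IsGRegular (Gqm F m) (cosetPartition A) := by
  suffices h : ∀ g ∈ Gqm F m, IsSection (cosetPartition A) (⇑g '' K) from
    ⟨K, by simpa using h 1 (one_mem _), h⟩
  intro g hg
  obtain ⟨α, hα, c, hgα⟩ := exists_eq_mul_add_of_mem_Gqm hg
  have hα0 := ne_zero_of_mem_mthPowers hα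
  have hKα : IsCompl (K.map (mulRight α)) A := by
    simpa [A.map_mulRight_map_mulRight (inv_mul_cancel₀ hα0)] using
      (hK α⁻¹ (inv_mem_mthPowers hα)).map_mulRight hα0
  have himage : ⇑g '' K = (· + c) '' (K.map (mulRight α) : Set F) := by
    rw [AddSubgroup.coe_map, Set.image_image]
    exact Set.image_congr fun x _ => hgα x
  exact himage ▸ isSection_cosetPartition_image_add_right hKα c

end Gqm

theorem stmt17_general (m : ℕ)
    (F : Type*) [Field F]
    (s : ℕ) (hs : 2 ≤ s) (V : Fin s → AddSubgroup F)
    (hne : ∀ i, V i ≠ ⊥) (hdirect : DirectSum.IsInternal V)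
    (hperm : ∀ α ∈ mthPowers F m, ∀ i : Fin s, ∃ j : Fin s,
      (V i).map (AddMonoidHom.mulRight α) = V j) :
    ¬ IsSynchronizing (Gqm F m) := by
  rintro ⟨-, hsync⟩
  let i₀ : Fin s := ⟨0, by omega⟩
  let i₁ : Fin s := ⟨1, by omega⟩
  have hV₀_ne_top : V i₀ ≠ ⊤ := fun h =>
    hne i₁ (top_disjoint.mp (h ▸ hdirect.addSubgroup_iSupIndep.pairwiseDisjoint
      (by simp [i₀, i₁, Fin.ext_iff] : i₀ ≠ i₁)))
  obtain ⟨K, hK⟩ := hdirect.exists_isCompl_of_map_mulRight_eq (V i₀)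
  refine not_isTrivialPartition_cosetPartition (hne i₀) hV₀_ne_top <| hsync _
    (isPartition_cosetPartition _) (isGRegular_Gqm_cosetPartition (K := K) fun α hα => ?_)
  obtain ⟨j, hj⟩ := hperm α hα i₀
  exact hj ▸ hK j α (ne_zero_of_mem_mthPowers hα) hj

/-- If `Z_{q,m}` is an imprimitive linear group, i.e. the multiplications by elements
of `S_{q,m}` permute the summands of a direct sum decomposition of `F_q` (as a vector
space over the prime field, equivalently into additive subgroups), then `G_{q,m}` is
non-synchronizing. -/
theorem stmt17 (p n q m : ℕ) (hp : p.Prime) (hpodd : Odd p) (hq : q = p ^ n)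
    (hm : m ∣ q - 1)
    (F : Type*) [Field F] [Fintype F] (hF : Fintype.card F = q)
    (s : ℕ) (hs : 2 ≤ s) (V : Fin s → AddSubgroup F)
    (hne : ∀ i, V i ≠ ⊥) (hdirect : DirectSum.IsInternal V)
    (hperm : ∀ α ∈ mthPowers F m, ∀ i : Fin s, ∃ j : Fin s,
      (V i).map (AddMonoidHom.mulRight α) = V j) :
    ¬ IsSynchronizing (Gqm F m) :=
  stmt17_general m F s hs V hne hdirect hperm
end

section
/- Let p be an odd prime, let n be an odd natural number with n ≥ 1, and set q = p^n. Then the group G_{q,2} is synchronizing. -/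
/-!
Let `S` be the section witnessing regularity of a non-trivial partition, and `B` a part with at
least two points other than `F`. For every affine map `g : x ↦ x c + a` with `c` a nonzero
square, `Sg` meets `B` exactly once, so `(s, b) ↦ b - s c` is a bijection `S × B → F`. Writing
`Â(t) = ∑_{a ∈ A} ψ(t a)` for a primitive additive character `ψ`, this reads
`B̂(t) Ŝ(-c t) = q [t = 0]`. If `B̂` is nonzero at two frequencies of different quadratic
character, then `Ŝ` vanishes off `0`, so `S = F` and `|B| = 1`. Otherwise the nonzero frequencies
of `B̂` all lie in one square class `ε S_{q,2}`. Twisting Fourier inversion by the quadratic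
character `χ` then gives `g(χ) m = χ(ε) q` for the integer
`m = ∑_{b ∈ B} (χ(b - x₀) - χ(b - x₁))`, where `x₀ ∈ B` and `x₁ ∉ B`. Squaring, with
`g(χ)² = χ(-1) q`, gives `χ(-1) m² = q`, so `q` is a perfect square; but `p ^ n` with `n` odd
is not.
-/
open Finset

section Fourier

variable {F K : Type*} [Field F] [Field K] {ψ : AddChar F K}

def fourierSum (ψ : AddChar F K) (A : Finset F) (t : F) : K := ∑ a ∈ A, ψ (t * a)

@[simp]
lemma fourierSum_zero (ψ : AddChar F K) (A : Finset F) : fourierSum ψ A 0 = #A := by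
  simp [fourierSum]

lemma sum_fourierSum_mul_addChar_neg [Fintype F] [DecidableEq F] (hψ : ψ.IsPrimitive)
    (A : Finset F) (x : F) :
    ∑ t, fourierSum ψ A t * ψ (-(t * x)) = if x ∈ A then (Fintype.card F : K) else 0 := by
  have hshift (t : F) : fourierSum ψ A t * ψ (-(t * x)) = ∑ a ∈ A, ψ (t * (a - x)) := by
    rw [fourierSum, sum_mul]
    refine sum_congr rfl fun a _ => ?_
    rw [← AddChar.map_add_eq_mul, mul_sub, sub_eq_add_neg]
  simp_rw [hshift]
  rw [sum_comm]
  simp_rw [AddChar.sum_mulShift _ hψ, sub_eq_zero]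
  push_cast
  exact sum_ite_eq' A x fun _ => (Fintype.card F : K)

lemma eq_empty_or_eq_univ_of_fourierSum_eq_zero [Fintype F] [CharZero K] (hψ : ψ.IsPrimitive)
    {A : Finset F} (hA : ∀ t ≠ 0, fourierSum ψ A t = 0) : A = ∅ ∨ A = univ := by
  classical
  have hcard (x : F) : (#A : K) = if x ∈ A then (Fintype.card F : K) else 0 := by
    rw [← sum_fourierSum_mul_addChar_neg hψ,
      sum_eq_single 0 (fun t _ ht => by rw [hA t ht, zero_mul]) (by simp)]
    simp
  rcases A.eq_empty_or_nonempty with hA₀ | ⟨x, hx⟩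
  · exact Or.inl hA₀
  · exact Or.inr (eq_univ_of_card A (by exact_mod_cast if_pos hx ▸ hcard x))

lemma bijOn_sub_mul {S B : Finset F} {c : F} (h : ∀ a, ∃! s, s ∈ S ∧ s * c + a ∈ B) :
    Set.BijOn (fun sb : F × F => sb.2 - sb.1 * c) ↑(S ×ˢ B) Set.univ := by
  refine ⟨Set.mapsTo_univ _ _, ?_, fun a _ => ?_⟩
  · rintro ⟨s, b⟩ hsb ⟨s', b'⟩ hsb' hdiff
    simp only [coe_product, Set.mem_prod, mem_coe] at hsb hsb' hdiff
    have hs : s = s' := (h (b - s * c)).unique ⟨hsb.1, by simpa using hsb.2⟩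
      ⟨hsb'.1, by rw [hdiff]; simpa using hsb'.2⟩
    subst hs
    simp_all
  · obtain ⟨s, ⟨hs, hsB⟩, -⟩ := h a
    exact ⟨(s, s * c + a), by simp [hs, hsB], by simp⟩

lemma fourierSum_mul_fourierSum_neg_mul [Fintype F] [DecidableEq F] (hψ : ψ.IsPrimitive)
    {S B : Finset F} {c : F} (h : ∀ a, ∃! s, s ∈ S ∧ s * c + a ∈ B) (t : F) :
    fourierSum ψ B t * fourierSum ψ S (-(c * t)) =
      if t = 0 then (Fintype.card F : K) else 0 := by
  calc _ = ∑ sb ∈ S ×ˢ B, ψ (t * (sb.2 - sb.1 * c)) := by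
        rw [fourierSum, fourierSum, sum_mul_sum, sum_product, sum_comm]
        refine sum_congr rfl fun s _ => sum_congr rfl fun b _ => ?_
        rw [← AddChar.map_add_eq_mul]
        ring_nf
    _ = ∑ a, ψ (t * a) :=
        sum_nbij _ (fun _ _ => mem_univ _) (bijOn_sub_mul h).injOn
          (by simpa using (bijOn_sub_mul h).surjOn) fun _ _ => rfl
    _ = _ := by
        simp_rw [mul_comm t]
        exact_mod_cast AddChar.sum_mulShift t hψ

end Fourier

section QuadraticChar

variable {F K : Type*} [Field F] [Fintype F] [Field K] {ψ : AddChar F K}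

lemma isSquare_div_or_isSquare_div_of_quadraticChar_ne [DecidableEq F] {a b : F} (ha : a ≠ 0)
    (hb : b ≠ 0) (hab : quadraticChar F a ≠ quadraticChar F b) (u : F) :
    IsSquare (u / a) ∨ IsSquare (u / b) := by
  by_contra! h
  rw [← quadraticChar_neg_one_iff_not_isSquare, ← quadraticChar_neg_one_iff_not_isSquare] at h
  have hua : quadraticChar F (u / a) * quadraticChar F a = quadraticChar F u := by
    rw [← map_mul, div_mul_cancel₀ _ ha]
  have hub : quadraticChar F (u / b) * quadraticChar F b = quadraticChar F u := by
    rw [← map_mul, div_mul_cancel₀ _ hb]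
  rw [h.1] at hua
  rw [h.2] at hub
  exact hab (by linarith)

lemma sum_mulChar_mul_addChar_mul {χ : MulChar F K} (hχ : χ ≠ 1) (hχq : χ.IsQuadratic)
    (ψ : AddChar F K) (z : F) : ∑ t, χ t * ψ (t * z) = χ z * gaussSum χ ψ := by
  rcases eq_or_ne z 0 with rfl | hz
  · simp [MulChar.sum_eq_zero_of_ne_one hχ, MulChar.map_zero]
  · have h := gaussSum_mulShift_eq χ ψ (Units.mk0 z hz)
    rw [hχq.inv] at h
    simpa [gaussSum, AddChar.mulShift_apply, mul_comm z] using h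

lemma gaussSum_mul_sum_mulChar_sub [DecidableEq F] {χ : MulChar F K} (hχ : χ ≠ 1)
    (hχq : χ.IsQuadratic) (hψ : ψ.IsPrimitive) {B : Finset F} {l : K}
    (hB : ∀ t ≠ 0, χ t * fourierSum ψ B t = l * fourierSum ψ B t) (x : F) :
    gaussSum χ ψ * ∑ b ∈ B, χ (b - x) =
      l * ((if x ∈ B then (Fintype.card F : K) else 0) - #B) := by
  have hterm (t : F) : χ t * (fourierSum ψ B t * ψ (-(t * x))) =
      l * (fourierSum ψ B t * ψ (-(t * x))) - if t = 0 then l * #B else 0 := by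
    rcases eq_or_ne t 0 with rfl | ht
    · simp [MulChar.map_zero]
    · rw [if_neg ht, sub_zero, ← mul_assoc, hB t ht, mul_assoc]
  calc gaussSum χ ψ * ∑ b ∈ B, χ (b - x)
      = ∑ b ∈ B, ∑ t, χ t * ψ (t * (b - x)) := by
        rw [mul_sum]
        exact sum_congr rfl fun b _ => by rw [sum_mulChar_mul_addChar_mul hχ hχq, mul_comm]
    _ = ∑ t, χ t * (fourierSum ψ B t * ψ (-(t * x))) := by
        rw [sum_comm]
        refine sum_congr rfl fun t _ => ?_
        rw [fourierSum, sum_mul, mul_sum]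
        refine sum_congr rfl fun b _ => ?_
        rw [← AddChar.map_add_eq_mul, mul_sub, sub_eq_add_neg]
    _ = _ := by
        simp_rw [hterm]
        rw [sum_sub_distrib, ← mul_sum, sum_fourierSum_mul_addChar_neg hψ,
          sum_ite_eq' univ (0 : F)]
        simp [mul_sub]

lemma isSquare_card_of_fourierSum_quadraticChar_eq [DecidableEq F] [CharZero K]
    (hF : ringChar F ≠ 2) (hψ : ψ.IsPrimitive) {B : Finset F} {x₀ x₁ : F}
    (hx₀ : x₀ ∈ B) (hx₁ : x₁ ∉ B) {ε : F} (hε : ε ≠ 0)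
    (hB : ∀ t ≠ 0, (quadraticChar F t : K) * fourierSum ψ B t =
      quadraticChar F ε * fourierSum ψ B t) :
    IsSquare (Fintype.card F) := by
  set χ := (quadraticChar F).ringHomComp (Int.castRingHom K)
  have hχ : χ ≠ 1 :=
    (MulChar.ringHomComp_ne_one_iff Int.cast_injective).mpr (quadraticChar_ne_one hF)
  have hχq : χ.IsQuadratic := (quadraticChar_isQuadratic F).comp _
  obtain ⟨m, hm⟩ : ∃ m : ℤ, (m : K) = ∑ b ∈ B, χ (b - x₀) - ∑ b ∈ B, χ (b - x₁) :=
    ⟨∑ b ∈ B, (quadraticChar F (b - x₀) - quadraticChar F (b - x₁)), by simp [χ, sum_sub_distrib]⟩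
  have hgm : gaussSum χ ψ * m = quadraticChar F ε * Fintype.card F := by
    have h₀ := gaussSum_mul_sum_mulChar_sub hχ hχq hψ hB x₀
    have h₁ := gaussSum_mul_sum_mulChar_sub hχ hχq hψ hB x₁
    rw [if_pos hx₀] at h₀
    rw [if_neg hx₁] at h₁
    rw [hm, mul_sub, h₀, h₁]
    ring
  have hq : (Fintype.card F : K) ≠ 0 := Nat.cast_ne_zero.mpr Fintype.card_ne_zero
  have hεsq : (quadraticChar F ε : K) ^ 2 = 1 := by exact_mod_cast quadraticChar_sq_one hε
  have hsign : quadraticChar F (-1) * m ^ 2 = Fintype.card F := by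
    apply Int.cast_injective (α := K)
    apply mul_left_cancel₀ hq
    push_cast
    calc (Fintype.card F : K) * (quadraticChar F (-1) * m ^ 2) = gaussSum χ ψ ^ 2 * m ^ 2 := by
          rw [gaussSum_sq hχ hχq hψ]
          simp only [χ, MulChar.ringHomComp_apply, Int.coe_castRingHom]
          ring
      _ = (Fintype.card F : K) * Fintype.card F := by rw [← mul_pow, hgm, mul_pow, hεsq]; ring
  rcases quadraticChar_dichotomy (neg_ne_zero.mpr (one_ne_zero (α := F))) with h | h
  · rw [h, one_mul] at hsign
    exact ⟨m.natAbs, by zify; rw [← hsign, ← sq_abs, sq]⟩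
  · rw [h] at hsign
    nlinarith [sq_nonneg m, Fintype.card_pos (α := F)]

end QuadraticChar

def SquareAffineImagesMeetOnce {F : Type*} [Field F] (S B : Finset F) : Prop :=
  ∀ c : F, c ≠ 0 → IsSquare c → ∀ a, ∃! s, s ∈ S ∧ s * c + a ∈ B

namespace SquareAffineImagesMeetOnce

variable {F K : Type*} [Field F] [Fintype F] [Field K] {ψ : AddChar F K} {S B : Finset F}

lemma card_mul_card (h : SquareAffineImagesMeetOnce S B) : #B * #S = Fintype.card F := by
  have hbij := bijOn_sub_mul (h 1 one_ne_zero IsSquare.one)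
  rw [mul_comm, ← card_product, ← card_univ]
  exact card_nbij _ (fun _ _ => mem_univ _) hbij.injOn (by simpa using hbij.surjOn)

lemma fourierSum_neg_mul_eq_zero [DecidableEq F] (h : SquareAffineImagesMeetOnce S B)
    (hψ : ψ.IsPrimitive) {t c : F} (ht : t ≠ 0) (hBt : fourierSum ψ B t ≠ 0) (hc : c ≠ 0)
    (hcsq : IsSquare c) : fourierSum ψ S (-(c * t)) = 0 := by
  have hprod := fourierSum_mul_fourierSum_neg_mul hψ (h c hc hcsq) t
  rw [if_neg ht] at hprod
  exact (mul_eq_zero.mp hprod).resolve_left hBt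

lemma card_eq_one_of_quadraticChar_ne [DecidableEq F] [CharZero K]
    (h : SquareAffineImagesMeetOnce S B) (hψ : ψ.IsPrimitive) {t₁ t₂ : F} (ht₁ : t₁ ≠ 0)
    (ht₂ : t₂ ≠ 0) (hB₁ : fourierSum ψ B t₁ ≠ 0) (hB₂ : fourierSum ψ B t₂ ≠ 0)
    (hχ : quadraticChar F t₁ ≠ quadraticChar F t₂) : #B = 1 := by
  have hS : ∀ u ≠ 0, fourierSum ψ S u = 0 := by
    intro u hu
    rcases isSquare_div_or_isSquare_div_of_quadraticChar_ne ht₁ ht₂ hχ (-u) with hsq | hsq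
    · simpa [ht₁] using h.fourierSum_neg_mul_eq_zero hψ ht₁ hB₁ (by simp [hu, ht₁]) hsq
    · simpa [ht₂] using h.fourierSum_neg_mul_eq_zero hψ ht₂ hB₂ (by simp [hu, ht₂]) hsq
  have hcard := h.card_mul_card
  rcases eq_empty_or_eq_univ_of_fourierSum_eq_zero hψ hS with rfl | rfl
  · simp only [card_empty, mul_zero] at hcard
    exact absurd hcard.symm Fintype.card_ne_zero
  · rw [card_univ] at hcard
    exact (Nat.mul_eq_right Fintype.card_ne_zero).mp hcard

theorem isSquare_card [DecidableEq F] (hF : ringChar F ≠ 2) (h : SquareAffineImagesMeetOnce S B)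
    (hB : B.Nontrivial) (hBu : B ≠ univ) : IsSquare (Fintype.card F) := by
  obtain ⟨ψ, hψ⟩ : ∃ ψ : AddChar F ℂ, ψ.IsPrimitive :=
    ⟨_, AddChar.FiniteField.primitiveChar_to_Complex_isPrimitive F⟩
  by_cases hsplit : ∃ t₁ t₂, t₁ ≠ 0 ∧ t₂ ≠ 0 ∧ fourierSum ψ B t₁ ≠ 0 ∧ fourierSum ψ B t₂ ≠ 0 ∧
      quadraticChar F t₁ ≠ quadraticChar F t₂
  · obtain ⟨t₁, t₂, ht₁, ht₂, hB₁, hB₂, hχ⟩ := hsplit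
    exact absurd (h.card_eq_one_of_quadraticChar_ne hψ ht₁ ht₂ hB₁ hB₂ hχ)
      (one_lt_card_iff_nontrivial.mpr hB).ne'
  push Not at hsplit
  obtain ⟨ε, hε, hBε⟩ : ∃ ε ≠ 0, fourierSum ψ B ε ≠ 0 := by
    by_contra! hvanish
    rcases eq_empty_or_eq_univ_of_fourierSum_eq_zero hψ hvanish with hB₀ | hB₀
    · exact hB.nonempty.ne_empty hB₀
    · exact hBu hB₀
  obtain ⟨x₀, hx₀⟩ := hB.nonempty
  obtain ⟨x₁, hx₁⟩ : ∃ x, x ∉ B := by simpa [eq_univ_iff_forall] using hBu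
  refine isSquare_card_of_fourierSum_quadraticChar_eq hF hψ hx₀ hx₁ hε fun t ht => ?_
  by_cases hBt : fourierSum ψ B t = 0
  · rw [hBt, mul_zero, mul_zero]
  · rw [hsplit t ε ht hε hBt hBε]

end SquareAffineImagesMeetOnce

namespace Setoid.IsPartition

variable {Ω : Type*} {P : Set (Set Ω)}

lemma eq_range_singleton (hP : IsPartition P) (h : ∀ B ∈ P, B.Subsingleton) :
    P = Set.range fun x : Ω => ({x} : Set Ω) := by
  ext B
  constructor
  · intro hB
    obtain ⟨x, hx⟩ := Set.nonempty_iff_ne_empty.mpr (ne_of_mem_of_not_mem hB hP.1)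
    exact ⟨x, ((h B hB).eq_singleton_of_mem hx).symm⟩
  · rintro ⟨x, rfl⟩
    obtain ⟨C, ⟨hC, hxC⟩, -⟩ := hP.2 x
    show {x} ∈ P
    rwa [← (h C hC).eq_singleton_of_mem hxC]

lemma eq_singleton_univ (hP : IsPartition P) (h : Set.univ ∈ P) : P = {Set.univ} := by
  refine Set.eq_singleton_iff_unique_mem.mpr ⟨h, fun B hB => ?_⟩
  obtain ⟨x, hx⟩ := Set.nonempty_iff_ne_empty.mpr (ne_of_mem_of_not_mem hB hP.1)
  exact (hP.2 x).unique ⟨hB, hx⟩ ⟨h, Set.mem_univ x⟩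

lemma exists_nontrivial_ne_univ (hP : IsPartition P) (hnt : ¬IsTrivialPartition P) :
    ∃ B ∈ P, B.Nontrivial ∧ B ≠ Set.univ := by
  by_contra! h
  refine hnt (Or.inr (hP.eq_range_singleton fun B hB => ?_))
  by_contra hB'
  rw [Set.not_subsingleton_iff] at hB'
  exact hnt (Or.inl (hP.eq_singleton_univ (h B hB hB' ▸ hB)))

end Setoid.IsPartition

lemma IsSection.existsUnique_mem_preimage {Ω : Type*} {P : Set (Set Ω)} {S B : Set Ω}
    {g : Equiv.Perm Ω} (hS : IsSection P (g '' S)) (hB : B ∈ P) : ∃! s, s ∈ S ∧ g s ∈ B := by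
  obtain ⟨_, ⟨⟨s, hs, rfl⟩, hsB⟩, huniq⟩ := hS B hB
  exact ⟨s, ⟨hs, hsB⟩, fun s' hs' => g.injective (huniq _ ⟨⟨s', hs'.1, rfl⟩, hs'.2⟩)⟩

section Gqm

variable {F : Type*} [Field F] {m : ℕ}

lemma addRight_mem_Gqm (a : F) : Equiv.addRight a ∈ Gqm F m :=
  Subgroup.subset_closure (Or.inl ⟨a, rfl⟩)

lemma mulRight₀_mem_Gqm {c : F} (hc : c ≠ 0) (hcm : c ∈ mthPowers F m) :
    Equiv.mulRight₀ c hc ∈ Gqm F m :=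
  Subgroup.subset_closure (Or.inr ⟨c, hc, hcm, rfl⟩)

lemma Gqm_ne_bot : Gqm F m ≠ ⊥ := by
  intro h
  have h₁ := addRight_mem_Gqm (m := m) (1 : F)
  rw [h, Subgroup.mem_bot] at h₁
  simpa using congrArg (fun e : Equiv.Perm F => e 0) h₁

lemma mem_mthPowers_two {c : F} (hc : c ≠ 0) (hsq : IsSquare c) : c ∈ mthPowers F 2 := by
  obtain ⟨r, rfl⟩ := hsq
  exact ⟨r, left_ne_zero_of_mul hc, sq r⟩

lemma affine_mem_Gqm_two {c : F} (hc : c ≠ 0) (hsq : IsSquare c) (a : F) :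
    (Equiv.mulRight₀ c hc).trans (Equiv.addRight a) ∈ Gqm F 2 :=
  mul_mem (addRight_mem_Gqm a) (mulRight₀_mem_Gqm hc (mem_mthPowers_two hc hsq))

theorem Gqm_two_isSynchronizing [Fintype F] (hF : ringChar F ≠ 2)
    (hq : ¬IsSquare (Fintype.card F)) : IsSynchronizing (Gqm F 2) := by
  classical
  refine ⟨Gqm_ne_bot, fun P hP hreg => by_contra fun hnt => ?_⟩
  obtain ⟨B, hBP, hBnt, hBu⟩ := hP.exists_nontrivial_ne_univ hnt
  obtain ⟨S, -, hS⟩ := hreg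
  lift S to Finset F using S.toFinite
  lift B to Finset F using B.toFinite
  refine hq (SquareAffineImagesMeetOnce.isSquare_card (S := S) hF (fun c hc hsq a => ?_) hBnt
    (by simpa using hBu))
  simpa using (hS _ (affine_mem_Gqm_two hc hsq a)).existsUnique_mem_preimage hBP

end Gqm

lemma Nat.Prime.not_isSquare_pow {p n : ℕ} (hp : p.Prime) (hn : Odd n) : ¬IsSquare (p ^ n) := by
  rintro ⟨k, hk⟩
  have hk₀ : k ≠ 0 := by
    rintro rfl
    exact pow_ne_zero n hp.ne_zero hk
  have h := congrArg (fun m => m.factorization p) hk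
  simp only [hp.factorization_pow, Finsupp.single_eq_same, Nat.factorization_mul hk₀ hk₀,
    Finsupp.add_apply] at h
  obtain ⟨j, rfl⟩ := hn
  omega

theorem stmt19_general (p n q : ℕ) (hp : p.Prime) (hpodd : Odd p) (hn : Odd n)
    (hq : q = p ^ n)
    (F : Type*) [Field F] [Fintype F] (hF : Fintype.card F = q) :
    IsSynchronizing (Gqm F 2) := by
  subst hq
  refine Gqm_two_isSynchronizing ?_ (hF ▸ hp.not_isSquare_pow hn)
  rw [Ne, FiniteField.even_card_iff_char_two, hF, Nat.odd_iff.mp hpodd.pow]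
  decide

/-- For `q = p^n` with `p` an odd prime and `n` odd, `G_{q,2}` is synchronizing. -/
theorem stmt19 (p n q : ℕ) (hp : p.Prime) (hpodd : Odd p) (hn : Odd n)
    (hn1 : 1 ≤ n) (hq : q = p ^ n)
    (F : Type*) [Field F] [Fintype F] (hF : Fintype.card F = q) :
    IsSynchronizing (Gqm F 2) :=
  stmt19_general p n q hp hpodd hn hq F hF
end
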